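/- arXiv:0802.3938 — 3 statements merged into one kernel-verified Lean document; each statement's English description precedes it below -/
import Mathlib

section
/- For every commutative ring R and every R-module M, the R-module map Φ : (M ⊗_R R[X]) ⊕ (M ⊗_R R[Y]) → M ⊗_R R[t,t⁻¹] defined by Φ(a, b) = α(a) − t⁻²·β(b) (where t⁻²· denotes multiplication by the element t⁻² of R[t,t⁻¹] on M ⊗_R R[t,t⁻¹]) is injective, and the map M → coker Φ sending m to the class of m ⊗ t⁻¹ is an isomorphism of R-modules. -/
open TensorProduct Polynomial LaurentPolynomial

noncomputable section

variable (R : Type*) [CommRing R] (M : Type*) [AddCommGroup M] [Module R M]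

/-- `α : M ⊗[R] R[X] → M ⊗[R] R[t,t⁻¹]`, induced by the `R`-algebra map `X ↦ t`. -/
noncomputable def inducedByXToT : M ⊗[R] R[X] →ₗ[R] M ⊗[R] R[T;T⁻¹] :=
  LinearMap.lTensor M (Polynomial.toLaurentAlg : R[X] →ₐ[R] R[T;T⁻¹]).toLinearMap

/-- `β : M ⊗[R] R[Y] → M ⊗[R] R[t,t⁻¹]`, induced by the `R`-algebra map `Y ↦ t⁻¹`. -/
noncomputable def inducedByYToTinv : M ⊗[R] R[X] →ₗ[R] M ⊗[R] R[T;T⁻¹] :=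
  LinearMap.lTensor M (Polynomial.aeval (T (-1) : R[T;T⁻¹]) : R[X] →ₐ[R] R[T;T⁻¹]).toLinearMap

/-- Multiplication by `t⁻²` on `M ⊗[R] R[t,t⁻¹]`. -/
noncomputable def mulTinvSq : M ⊗[R] R[T;T⁻¹] →ₗ[R] M ⊗[R] R[T;T⁻¹] :=
  LinearMap.lTensor M (LinearMap.mulLeft R (T (-2) : R[T;T⁻¹]))

/-- The map `Φ(a, b) = α(a) − t⁻²·β(b)`. -/
noncomputable def PhiMap : (M ⊗[R] R[X]) × (M ⊗[R] R[X]) →ₗ[R] M ⊗[R] R[T;T⁻¹] :=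
  inducedByXToT R M ∘ₗ LinearMap.fst R _ _ -
    mulTinvSq R M ∘ₗ inducedByYToTinv R M ∘ₗ LinearMap.snd R _ _

/-- The map `M → coker Φ`, `m ↦ [m ⊗ t⁻¹]`. -/
noncomputable def toCokerPhi : M →ₗ[R] (M ⊗[R] R[T;T⁻¹]) ⧸ LinearMap.range (PhiMap R M) :=
  (LinearMap.range (PhiMap R M)).mkQ ∘ₗ
    (TensorProduct.mk R M R[T;T⁻¹]).flip (T (-1))

/-! In the coordinates `M ⊗ R[X] ≅ ℕ →₀ M` and `M ⊗ R[t,t⁻¹] ≅ ℤ →₀ M`, the map `α` sends the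
coefficient of `Xⁿ` to `tⁿ` and `t⁻²β` sends the coefficient of `Yⁿ` to `t⁻²⁻ⁿ`. These exponent maps
`ℕ → ℤ` are injective with disjoint images covering `ℤ ∖ {-1}`, so `Φ` is injective and its image
is the kernel of the `t⁻¹`-coefficient `M ⊗ R[t,t⁻¹] → M`. That coefficient map is split by
`m ↦ m ⊗ t⁻¹`, so it identifies `coker Φ` with `M`. -/

theorem Finsupp.range_lmapDomain_eq_supported {R M α β : Type*} [Semiring R] [AddCommMonoid M]
    [Module R M] (f : α → β) :
    LinearMap.range (lmapDomain M R f) = supported M R (Set.range f) := by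
  rw [LinearMap.range_eq_map, ← supported_univ, lmapDomain_supported, Set.image_univ]

theorem Finsupp.supported_compl_singleton_eq_ker_lapply {R M α : Type*} [Semiring R]
    [AddCommMonoid M] [Module R M] (a : α) :
    supported M R ({a}ᶜ : Set α) = LinearMap.ker (lapply a) := by
  ext p
  simp [mem_supported']

theorem Finsupp.injective_lmapDomain_coprod_neg {R M α β γ : Type*} [Ring R] [AddCommGroup M]
    [Module R M] {f : α → γ} {g : β → γ} (hf : Function.Injective f)
    (hg : Function.Injective g) (hfg : Disjoint (Set.range f) (Set.range g)) :
    Function.Injective ((lmapDomain M R f).coprod (-lmapDomain M R g)) := by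
  have hdisj : Disjoint (LinearMap.range (lmapDomain M R f))
      (LinearMap.range (-lmapDomain M R g)) := by
    rw [LinearMap.range_neg, range_lmapDomain_eq_supported, range_lmapDomain_eq_supported]
    exact disjoint_supported_supported hfg
  rw [← LinearMap.ker_eq_bot, LinearMap.ker_coprod_of_disjoint_range _ _ hdisj,
    LinearMap.ker_neg, LinearMap.ker_eq_bot.2 (mapDomain_injective hf),
    LinearMap.ker_eq_bot.2 (mapDomain_injective hg), Submodule.prod_bot]

theorem Finsupp.range_lmapDomain_coprod_neg {R M α β γ : Type*} [Ring R] [AddCommGroup M]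
    [Module R M] (f : α → γ) (g : β → γ) :
    LinearMap.range ((lmapDomain M R f).coprod (-lmapDomain M R g)) =
      supported M R (Set.range f ∪ Set.range g) := by
  rw [LinearMap.range_coprod, LinearMap.range_neg, range_lmapDomain_eq_supported,
    range_lmapDomain_eq_supported, supported_union]

theorem Submodule.bijective_mkQ_comp_of_leftInverse {R M N : Type*} [Ring R] [AddCommGroup M]
    [Module R M] [AddCommGroup N] [Module R N] {c : N →ₗ[R] M} {s : M →ₗ[R] N}
    (hcs : Function.LeftInverse c s) {p : Submodule R N} (hp : p = LinearMap.ker c) :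
    Function.Bijective (p.mkQ ∘ₗ s) := by
  subst hp
  refine ⟨fun m m' h => ?_, fun x => ?_⟩
  · simpa [hcs m, hcs m'] using congrArg ((LinearMap.ker c).liftQ c le_rfl) h
  · obtain ⟨n, rfl⟩ := (LinearMap.ker c).mkQ_surjective x
    refine ⟨c n, (Submodule.Quotient.eq _).2 ?_⟩
    simp [hcs (c n)]

theorem range_natCast_union_range_neg_two_sub :
    Set.range (Nat.cast : ℕ → ℤ) ∪ Set.range (fun n : ℕ => -2 - (n : ℤ)) = {-1}ᶜ := by
  ext k
  simp only [Set.mem_union, Set.mem_range, Set.mem_compl_singleton_iff]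
  constructor
  · rintro (⟨n, rfl⟩ | ⟨n, rfl⟩) <;> omega
  · intro hk
    rcases le_or_gt 0 k with h | h
    · exact Or.inl ⟨k.toNat, by omega⟩
    · exact Or.inr ⟨(-2 - k).toNat, by omega⟩

theorem disjoint_range_natCast_range_neg_two_sub :
    Disjoint (Set.range (Nat.cast : ℕ → ℤ)) (Set.range fun n : ℕ => -2 - (n : ℤ)) :=
  Set.disjoint_left.2 <| by rintro _ ⟨m, rfl⟩ ⟨n, h⟩; dsimp only at h; omega

def laurentTensorEquiv : M ⊗[R] R[T;T⁻¹] ≃ₗ[R] (ℤ →₀ M) :=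
  (LinearEquiv.lTensor M (AddMonoidAlgebra.coeffLinearEquiv R)).trans
    (finsuppScalarRight R R M ℤ)

def polynomialTensorEquiv : M ⊗[R] R[X] ≃ₗ[R] (ℕ →₀ M) :=
  (LinearEquiv.lTensor M
      ((toFinsuppIsoLinear R).trans (AddMonoidAlgebra.coeffLinearEquiv R))).trans
    (finsuppScalarRight R R M ℕ)

theorem laurentTensorEquiv_tmul_C_mul_T (m : M) (r : R) (k : ℤ) :
    laurentTensorEquiv R M (m ⊗ₜ (LaurentPolynomial.C r * T k)) =
      Finsupp.single k (r • m) := by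
  rw [← single_eq_C_mul_T]
  ext i
  simp [laurentTensorEquiv, -single_eq_C_mul_T, Finsupp.single_apply, ite_smul]

theorem polynomialTensorEquiv_tmul_monomial (m : M) (n : ℕ) (r : R) :
    polynomialTensorEquiv R M (m ⊗ₜ monomial n r) = Finsupp.single n (r • m) := by
  ext i
  simp [polynomialTensorEquiv, Finsupp.single_apply]

variable {R M} in
theorem laurentTensorEquiv_comp_lTensor {φ : R[X] →ₗ[R] R[T;T⁻¹]} {e : ℕ → ℤ}
    (hφ : ∀ n r, φ (monomial n r) = LaurentPolynomial.C r * T (e n)) :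
    (laurentTensorEquiv R M).toLinearMap ∘ₗ φ.lTensor M =
      Finsupp.lmapDomain M R e ∘ₗ (polynomialTensorEquiv R M).toLinearMap := by
  refine TensorProduct.ext' fun m p => ?_
  induction p using Polynomial.induction_on' with
  | add p q hp hq => simp only [tmul_add, map_add, hp, hq]
  | monomial n r =>
    simp [hφ, laurentTensorEquiv_tmul_C_mul_T, polynomialTensorEquiv_tmul_monomial]

theorem toLaurentAlg_monomial (n : ℕ) (r : R) :
    toLaurentAlg (monomial n r) = LaurentPolynomial.C r * T n := by
  rw [toLaurentAlg_apply, ← C_mul_X_pow_eq_monomial, toLaurent_C_mul_X_pow]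

theorem T_neg_two_mul_aeval_T_neg_one_monomial (n : ℕ) (r : R) :
    T (-2) * aeval (T (-1) : R[T;T⁻¹]) (monomial n r) = LaurentPolynomial.C r * T (-2 - n) := by
  rw [aeval_monomial, T_pow, ← LaurentPolynomial.C_eq_algebraMap, mul_left_comm, ← T_add]
  congr 2
  ring

theorem laurentTensorEquiv_comp_PhiMap :
    (laurentTensorEquiv R M).toLinearMap ∘ₗ PhiMap R M =
      ((Finsupp.lmapDomain M R (Nat.cast : ℕ → ℤ)).coprod
          (-Finsupp.lmapDomain M R fun n : ℕ => -2 - (n : ℤ))) ∘ₗ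
        ((polynomialTensorEquiv R M).prodCongr (polynomialTensorEquiv R M)).toLinearMap := by
  have hα := laurentTensorEquiv_comp_lTensor (M := M) (φ := toLaurentAlg.toLinearMap)
    (toLaurentAlg_monomial R)
  have hβ := laurentTensorEquiv_comp_lTensor (M := M)
    (φ := LinearMap.mulLeft R (T (-2)) ∘ₗ (aeval (T (-1) : R[T;T⁻¹])).toLinearMap)
    (T_neg_two_mul_aeval_T_neg_one_monomial R)
  refine LinearMap.ext fun x => ?_
  have h₁ := LinearMap.congr_fun hα x.1
  have h₂ := LinearMap.congr_fun hβ x.2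
  simp only [LinearMap.comp_apply, LinearMap.lTensor_comp, LinearEquiv.coe_coe] at h₁ h₂
  simp [PhiMap, inducedByXToT, inducedByYToTinv, mulTinvSq, h₁, h₂, sub_eq_add_neg]

def tensorLaurentCoeff (k : ℤ) : M ⊗[R] R[T;T⁻¹] →ₗ[R] M :=
  Finsupp.lapply k ∘ₗ (laurentTensorEquiv R M).toLinearMap

theorem leftInverse_tensorLaurentCoeff (k : ℤ) :
    Function.LeftInverse (tensorLaurentCoeff R M k)
      ((TensorProduct.mk R M R[T;T⁻¹]).flip (T k)) := fun m => by
  simpa [tensorLaurentCoeff] using congrArg (· k) (laurentTensorEquiv_tmul_C_mul_T R M m 1 k)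

theorem injective_PhiMap : Function.Injective (PhiMap R M) := by
  refine Function.Injective.of_comp (f := laurentTensorEquiv R M) ?_
  have hcomp := congrArg DFunLike.coe (laurentTensorEquiv_comp_PhiMap R M)
  simp only [LinearMap.coe_comp, LinearEquiv.coe_coe] at hcomp
  rw [hcomp]
  exact (Finsupp.injective_lmapDomain_coprod_neg Nat.cast_injective
    (fun _ _ h => by simpa using h) disjoint_range_natCast_range_neg_two_sub).comp
    (LinearEquiv.injective _)

theorem range_PhiMap :
    LinearMap.range (PhiMap R M) = LinearMap.ker (tensorLaurentCoeff R M (-1)) := by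
  rw [tensorLaurentCoeff, LinearMap.ker_comp, ← Finsupp.supported_compl_singleton_eq_ker_lapply,
    ← range_natCast_union_range_neg_two_sub, ← Finsupp.range_lmapDomain_coprod_neg,
    ← LinearMap.range_comp_of_range_eq_top _
      ((polynomialTensorEquiv R M).prodCongr (polynomialTensorEquiv R M)).range,
    ← laurentTensorEquiv_comp_PhiMap, LinearMap.range_comp,
    Submodule.comap_map_eq_of_injective (LinearEquiv.injective _)]

/-- `Φ` is injective, and `m ↦ [m ⊗ t⁻¹] : M → coker Φ` is an isomorphism of `R`-modules. -/
theorem bass_sigma_component :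
    Function.Injective (PhiMap R M) ∧ Function.Bijective (toCokerPhi R M) :=
  ⟨injective_PhiMap R M, Submodule.bijective_mkQ_comp_of_leftInverse
    (leftInverse_tensorLaurentCoeff R M (-1)) (range_PhiMap R M)⟩

end
end

section
/- For every commutative ring R, let S′ denote the monoid algebra of ℤ × ℤ over R (equivalently, the Laurent polynomial ring R[x^{±1}, y^{±1}], where x and y are the basis elements corresponding to (1,0) and (0,1)), and let μ′ : S′ → R[t,t⁻¹] be the R-algebra homomorphism induced by the addition homomorphism ℤ × ℤ → ℤ (so μ′(x) = μ′(y) = t). Then the sequence of S′-modules 0 → S′ → S′ → R[t,t⁻¹] → 0 is exact, where the first map is multiplication by x − y and the second is μ′. Equivalently: μ′ is surjective, its kernel is the principal ideal generated by x − y, and x − y is not a zero divisor in S′. -/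
/-! The section `s : t ↦ x` of `μ′` makes it surjective. Modulo `x − y`, every `p` is congruent
to `s (μ′ p)`, since `p ↦ p` and `p ↦ s (μ′ p)` are algebra maps `S′ → S′/(x − y)` agreeing on `x`
and `y`; hence `ker μ′ = (x − y)`. If `p (x − y) = 0`, the coefficients of `p` are invariant
under translation by `(1, −1)`, an element of infinite order, so the finitely supported `p`
vanishes. -/

open LaurentPolynomial

noncomputable section

variable (R : Type*) [CommRing R]

/-- `x = single (1,0) 1` in `S′ = R[x^{±1}, y^{±1}]`, the monoid algebra of `ℤ × ℤ` over `R`. -/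
noncomputable def xVar : AddMonoidAlgebra R (ℤ × ℤ) := AddMonoidAlgebra.single ((1 : ℤ), (0 : ℤ)) 1

/-- `y = single (0,1) 1` in `S′ = R[x^{±1}, y^{±1}]`, the monoid algebra of `ℤ × ℤ` over `R`. -/
noncomputable def yVar : AddMonoidAlgebra R (ℤ × ℤ) := AddMonoidAlgebra.single ((0 : ℤ), (1 : ℤ)) 1

/-- `μ′ : S′ → R[t,t⁻¹]`, the `R`-algebra homomorphism induced by the addition homomorphism
`ℤ × ℤ →+ ℤ` (so `μ′(x) = μ′(y) = t`). -/
noncomputable def muLaurent : AddMonoidAlgebra R (ℤ × ℤ) →ₐ[R] R[T;T⁻¹] :=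
  AddMonoidAlgebra.mapDomainAlgHom R R (AddMonoidHom.fst ℤ ℤ + AddMonoidHom.snd ℤ ℤ)

theorem Finsupp.eq_zero_of_periodic {G M : Type*} [AddLeftCancelMonoid G] [Zero M] (f : G →₀ M)
    {d : G} (hd : ¬IsOfFinAddOrder d) (hf : Function.Periodic f d) : f = 0 := by
  ext g
  by_contra hg
  have hmem : ∀ n : ℕ, g + n • d ∈ f.support := fun n ↦ by
    rwa [Finsupp.mem_support_iff, hf.nsmul n]
  exact Set.infinite_of_injective_forall_mem
    ((add_right_injective g).comp (injective_nsmul_iff_not_isOfFinAddOrder.2 hd)) hmem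
    f.support.finite_toSet

theorem AddMonoidAlgebra.single_sub_single_mem_nonZeroDivisors {k G : Type*} [CommRing k]
    [AddCommGroup G] {a b : G} (hab : ¬IsOfFinAddOrder (a - b)) :
    single a (1 : k) - single b 1 ∈ nonZeroDivisors (AddMonoidAlgebra k G) := by
  rw [mem_nonZeroDivisors_iff_right]
  intro p hp
  rw [mul_sub, sub_eq_zero] at hp
  refine AddMonoidAlgebra.coeff_eq_zero.1 (Finsupp.eq_zero_of_periodic _ hab fun g ↦ ?_)
  simpa [sub_eq_add_neg, add_assoc] using congr(($hp).coeff (g + a)).symm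

lemma xVar_sub_yVar_mem_nonZeroDivisors :
    xVar R - yVar R ∈ nonZeroDivisors (AddMonoidAlgebra R (ℤ × ℤ)) :=
  AddMonoidAlgebra.single_sub_single_mem_nonZeroDivisors
    (not_isOfFinAddOrder_of_isAddTorsionFree (by decide))

lemma muLaurent_single (a b : ℤ) (r : R) :
    muLaurent R (AddMonoidAlgebra.single (a, b) r) = AddMonoidAlgebra.single (a + b) r := by
  simp [muLaurent]

lemma muLaurent_xVar_sub_yVar : muLaurent R (xVar R - yVar R) = 0 := by
  simp [xVar, yVar, muLaurent_single]

def laurentSection : R[T;T⁻¹] →ₐ[R] AddMonoidAlgebra R (ℤ × ℤ) :=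
  AddMonoidAlgebra.mapDomainAlgHom R R (AddMonoidHom.inl ℤ ℤ)

lemma muLaurent_comp_laurentSection : (muLaurent R).comp (laurentSection R) = AlgHom.id R _ := by
  rw [muLaurent, laurentSection, ← AddMonoidAlgebra.mapDomainAlgHom_comp]
  convert AddMonoidAlgebra.mapDomainAlgHom_id
  ext
  simp

lemma laurentSection_single (n : ℤ) (r : R) :
    laurentSection R (AddMonoidAlgebra.single n r) = AddMonoidAlgebra.single (n, 0) r := by
  simp only [laurentSection, AddMonoidAlgebra.mapDomainAlgHom_apply,
    AddMonoidAlgebra.mapDomain_single, AddMonoidHom.inl_apply]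

lemma laurentSection_muLaurent_xVar : laurentSection R (muLaurent R (xVar R)) = xVar R := by
  rw [xVar, muLaurent_single, laurentSection_single, add_zero]

lemma laurentSection_muLaurent_yVar : laurentSection R (muLaurent R (yVar R)) = xVar R := by
  rw [yVar, muLaurent_single, laurentSection_single, zero_add, xVar]

lemma algHom_ext_xVar_yVar {A : Type*} [Semiring A] [Algebra R A]
    {φ ψ : AddMonoidAlgebra R (ℤ × ℤ) →ₐ[R] A} (hx : φ (xVar R) = ψ (xVar R))
    (hy : φ (yVar R) = ψ (yVar R)) : φ = ψ := by
  have hline (e : ℤ →+ ℤ × ℤ) (he : φ (.single (e 1) 1) = ψ (.single (e 1) 1)) (n : ℤ) :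
      φ (.single (e n) 1) = ψ (.single (e n) 1) := by
    have := MonoidHom.ext_mint
      (f := (φ : _ →* A).comp ((AddMonoidAlgebra.of R _).comp e.toMultiplicative))
      (g := (ψ : _ →* A).comp ((AddMonoidAlgebra.of R _).comp e.toMultiplicative))
      (by simpa using he)
    simpa using DFunLike.congr_fun this (Multiplicative.ofAdd n)
  refine AddMonoidAlgebra.algHom_ext (fun ⟨a, b⟩ ↦ ?_) (Subsingleton.elim _ _)
  rw [show ((a, b) : ℤ × ℤ) = (a, 0) + (0, b) by simp, ← one_mul (1 : R),
    ← AddMonoidAlgebra.single_mul_single, map_mul, map_mul]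
  congr 1
  · exact hline (AddMonoidHom.inl ℤ ℤ) hx a
  · exact hline (AddMonoidHom.inr ℤ ℤ) hy b

lemma mkₐ_comp_laurentSection_comp_muLaurent :
    (Ideal.Quotient.mkₐ R (Ideal.span {xVar R - yVar R})).comp
      ((laurentSection R).comp (muLaurent R)) = Ideal.Quotient.mkₐ R _ := by
  refine algHom_ext_xVar_yVar R ?_ ?_
  · simp only [AlgHom.comp_apply, laurentSection_muLaurent_xVar]
  · simp only [AlgHom.comp_apply, laurentSection_muLaurent_yVar, Ideal.Quotient.mkₐ_eq_mk,
      Ideal.Quotient.eq]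
    exact Ideal.mem_span_singleton_self _

lemma ker_muLaurent :
    RingHom.ker (muLaurent R : AddMonoidAlgebra R (ℤ × ℤ) →+* R[T;T⁻¹]) =
      Ideal.span {xVar R - yVar R} := by
  refine le_antisymm (fun p hp ↦ ?_) (Ideal.span_le.2 ?_)
  · have hp : muLaurent R p = 0 := hp
    rw [← Ideal.Quotient.eq_zero_iff_mem]
    simpa [hp] using congr($(mkₐ_comp_laurentSection_comp_muLaurent R) p).symm
  · simp [muLaurent_xVar_sub_yVar]

/-- The sequence of `S′`-modules `0 → S′ → S′ → R[t,t⁻¹] → 0` is exact, where the first map is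
multiplication by `x − y` and the second is `μ′`: that is, `μ′` is surjective, its kernel is
the principal ideal generated by `x − y`, and `x − y` is not a zero divisor in `S′`. -/
theorem resolution_of_laurent_ring_exact :
    Function.Surjective (muLaurent R) ∧
    RingHom.ker (muLaurent R : AddMonoidAlgebra R (ℤ × ℤ) →+* R[T;T⁻¹]) =
      Ideal.span {xVar R - yVar R} ∧
    (xVar R - yVar R) ∈ nonZeroDivisors (AddMonoidAlgebra R (ℤ × ℤ)) :=
  ⟨Function.RightInverse.surjective (g := laurentSection R)
      (AlgHom.congr_fun (muLaurent_comp_laurentSection R)),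
    ker_muLaurent R, xVar_sub_yVar_mem_nonZeroDivisors R⟩

end
end

section
/- Let R be a commutative ring, S′ the monoid algebra of ℤ × ℤ over R (the Laurent polynomial ring R[x^{±1}, y^{±1}]), and regard R[t,t⁻¹] as an S′-module via the R-algebra homomorphism μ′ : S′ → R[t,t⁻¹] induced by addition ℤ × ℤ → ℤ (so x, y ↦ t). Then Tor_0^{S′}(R[t,t⁻¹], R[t,t⁻¹]) is isomorphic to R[t,t⁻¹], Tor_1^{S′}(R[t,t⁻¹], R[t,t⁻¹]) is isomorphic to R[t,t⁻¹] (both as S′-modules, S′ acting through μ′), and Tor_n^{S′}(R[t,t⁻¹], R[t,t⁻¹]) = 0 for every n ≥ 2. -/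
open CategoryTheory LaurentPolynomial

noncomputable section

variable (R : Type*) [CommRing R]

/-- `R[t,t⁻¹]` regarded as a module over `S′` via `μ′`. -/
noncomputable instance laurentModuleOverS' :
    Module (AddMonoidAlgebra R (ℤ × ℤ)) (LaurentPolynomial R) :=
  ((muLaurent R).toRingHom).toModule

/-- `R[t,t⁻¹]` as an object of the category of `S′`-modules (with `S′` acting via `μ′`). -/
noncomputable def laurentAsS'Mod : ModuleCat (AddMonoidAlgebra R (ℤ × ℤ)) :=
  ModuleCat.of (AddMonoidAlgebra R (ℤ × ℤ)) (LaurentPolynomial R)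

/-!
In `S′` the kernel of `μ′` is the principal ideal generated by the non-zero-divisor `x - y`
(modulo `x - y` the two variables agree, so `S′ ⧸ (x - y) ≅ R[t,t⁻¹]`). Hence
`0 → S′ --(x - y)--> S′ --μ′--> R[t,t⁻¹] → 0` is a projective resolution of length one.
Since `x - y` acts by zero on `R[t,t⁻¹]`, the differential of the tensored complex vanishes, so
`Tor₀` and `Tor₁` are both `R[t,t⁻¹] ⊗_{S′} S′ ≅ R[t,t⁻¹]`, and all higher `Tor` vanish.
-/

open Limits MonoidalCategory AddMonoidAlgebra

universe u

theorem AddMonoidAlgebra.isLeftRegular_single_one_sub_single_one {k G : Type*} [Ring k]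
    [AddCommGroup G] [IsAddTorsionFree G] {a b : G} (hab : a ≠ b) :
    IsLeftRegular (single a 1 - single b 1 : k[G]) := by
  -- A solution `f` is invariant under translation by `b - a`: if nonzero, its support is infinite.
  rw [isLeftRegular_iff_right_eq_zero_of_mul]
  intro f hf
  rw [sub_mul, sub_eq_zero] at hf
  have hshift : ∀ p, f.coeff (p + (b - a)) = f.coeff p := fun p => by
    have := congrArg (fun g : k[G] => g.coeff (p + b)) hf
    simp only [coeff_single_mul_apply, one_mul] at this
    convert this using 2 <;> abel
  have hiter : ∀ p (n : ℕ), f.coeff (p + n • (b - a)) = f.coeff p := fun p n => by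
    induction n with
    | zero => simp
    | succ n ih => rw [succ_nsmul, ← add_assoc, hshift, ih]
  ext p
  by_contra hp
  have hinj : Function.Injective fun n : ℕ => p + n • (b - a) :=
    (add_right_injective p).comp <| injective_nsmul_iff_not_isOfFinAddOrder.2 <|
      not_isOfFinAddOrder_of_isAddTorsionFree (sub_ne_zero.2 hab.symm)
  exact (Set.infinite_of_injective_forall_mem hinj fun n => by simpa [hiter] using hp)
    f.coeff.support.finite_toSet

section Koszul

variable {A : Type u} [CommRing A]

variable (A) in
def koszulObj : ℕ → ModuleCat A
  | 0 | 1 => ModuleCat.of A A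
  | _ + 2 => ModuleCat.of A PUnit

def koszulD (s : A) : ∀ n, koszulObj A (n + 1) ⟶ koszulObj A n
  | 0 => ModuleCat.ofHom (LinearMap.mulLeft A s)
  | _ + 1 => 0

def koszulComplex (s : A) : ChainComplex (ModuleCat A) ℕ :=
  ChainComplex.of (koszulObj A) (koszulD s) fun _ => zero_comp

theorem koszulComplex_d_one_zero (s : A) :
    (koszulComplex s).d 1 0 = ModuleCat.ofHom (LinearMap.mulLeft A s) :=
  ChainComplex.of_d (koszulObj A) (koszulD s) 0

theorem isZero_koszulComplex_X (s : A) (n : ℕ) : IsZero ((koszulComplex s).X (n + 2)) :=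
  ModuleCat.isZero_of_subsingleton (ModuleCat.of A PUnit)

instance (s : A) : ∀ n, Projective ((koszulComplex s).X n)
  | 0 | 1 => inferInstanceAs (Projective (ModuleCat.of A A))
  | n + 2 => (isZero_koszulComplex_X s n).projective

variable {s : A} {M : ModuleCat A} {π : A →ₗ[A] M}

def koszulAugmentation (hexact : Function.Exact (LinearMap.mulLeft A s) π) :
    koszulComplex s ⟶ (ChainComplex.single₀ _).obj M :=
  (ChainComplex.toSingle₀Equiv _ _).symm ⟨ModuleCat.ofHom π, by
    rw [koszulComplex_d_one_zero]
    exact ModuleCat.hom_ext hexact.linearMap_comp_eq_zero⟩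

theorem koszulAugmentation_f_zero (hexact : Function.Exact (LinearMap.mulLeft A s) π) :
    (koszulAugmentation hexact).f 0 = ModuleCat.ofHom π :=
  ChainComplex.toSingle₀Equiv_symm_apply_f_zero _ _

def koszulResolution (hs : IsLeftRegular s) (hexact : Function.Exact (LinearMap.mulLeft A s) π)
    (hπ : Function.Surjective π) : ProjectiveResolution M where
  complex := koszulComplex s
  π := koszulAugmentation hexact
  quasiIso := ⟨fun
    | 0 => by
      rw [ChainComplex.quasiIsoAt₀_iff,
        ShortComplex.quasiIso_iff_of_zeros' _ (by simp; rfl) (by simp; rfl) (by simp; rfl)]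
      constructor
      · rw [ShortComplex.ShortExact.moduleCat_exact_iff_function_exact]
        change Function.Exact ((koszulComplex s).d 1 0) ((koszulAugmentation hexact).f 0)
        rwa [koszulComplex_d_one_zero, koszulAugmentation_f_zero]
      · rw [ModuleCat.epi_iff_surjective]
        change Function.Surjective ((koszulAugmentation hexact).f 0)
        rwa [koszulAugmentation_f_zero]
    | 1 => by
      rw [quasiIsoAt_iff_exactAt' _ _ (ChainComplex.exactAt_succ_single_obj _ _),
        HomologicalComplex.exactAt_iff' _ 2 1 0 (by simp) (by simp),
        ShortComplex.exact_iff_mono _ ((isZero_koszulComplex_X s 0).eq_of_src _ _),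
        ModuleCat.mono_iff_injective]
      change Function.Injective ((koszulComplex s).d 1 0)
      rw [koszulComplex_d_one_zero]
      exact hs
    | n + 2 => by
      rw [quasiIsoAt_iff_exactAt' _ _ (ChainComplex.exactAt_succ_single_obj _ _),
        HomologicalComplex.exactAt_iff' _ (n + 3) (n + 2) (n + 1) (by simp) (by simp)]
      exact ShortComplex.exact_of_isZero_X₂ _ (isZero_koszulComplex_X s n)⟩

variable (N : ModuleCat A)

theorem tensorLeft_koszulComplex_d_eq_zero (hN : ∀ x : N, s • x = 0) (i j : ℕ) :
    ((((tensoringLeft _).obj N).mapHomologicalComplex _).obj (koszulComplex s)).d i j = 0 := by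
  by_cases hij : (ComplexShape.down ℕ).Rel i j
  · obtain rfl : i = j + 1 := hij.symm
    rcases j with _ | j
    · rw [Functor.mapHomologicalComplex_obj_d, koszulComplex_d_one_zero]
      exact ModuleCat.hom_ext <| TensorProduct.ext' fun x a => by
        change x ⊗ₜ[A] (s • a) = 0
        rw [← TensorProduct.smul_tmul, hN, TensorProduct.zero_tmul]
    · exact (((tensoringLeft _).obj N).map_isZero (isZero_koszulComplex_X s j)).eq_of_src _ _
  · exact HomologicalComplex.shape _ _ _ hij

def torIsoTensorKoszulX (hs : IsLeftRegular s)
    (hexact : Function.Exact (LinearMap.mulLeft A s) π) (hπ : Function.Surjective π)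
    (hN : ∀ x : N, s • x = 0) (n : ℕ) :
    ((Tor (ModuleCat A) n).obj N).obj M ≅ N ⊗ (koszulComplex s).X n :=
  (koszulResolution hs hexact hπ).isoLeftDerivedObj _ n ≪≫
    (ShortComplex.LeftHomologyData.ofZeros _ (tensorLeft_koszulComplex_d_eq_zero N hN _ _)
      (tensorLeft_koszulComplex_d_eq_zero N hN _ _)).homologyIso

def torIsoOfLeOne (hs : IsLeftRegular s) (hexact : Function.Exact (LinearMap.mulLeft A s) π)
    (hπ : Function.Surjective π) (hN : ∀ x : N, s • x = 0) :
    ∀ n ≤ 1, ((Tor (ModuleCat A) n).obj N).obj M ≅ N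
  | 0, _ | 1, _ => torIsoTensorKoszulX N hs hexact hπ hN _ ≪≫ ρ_ N

theorem isZero_tor_of_two_le (hs : IsLeftRegular s)
    (hexact : Function.Exact (LinearMap.mulLeft A s) π) (hπ : Function.Surjective π)
    (n : ℕ) (hn : 2 ≤ n) :
    IsZero (((Tor (ModuleCat A) n).obj N).obj M) := by
  obtain ⟨n, rfl⟩ := Nat.exists_eq_add_of_le' hn
  exact (ShortComplex.isZero_homology_of_isZero_X₂ _
    (((tensoringLeft _).obj N).map_isZero (isZero_koszulComplex_X s n))).of_iso
    ((koszulResolution hs hexact hπ).isoLeftDerivedObj _ _)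

end Koszul

def xSubY : AddMonoidAlgebra R (ℤ × ℤ) := single (1, 0) 1 - single (0, 1) 1

def laurentInl : R[T;T⁻¹] →ₐ[R] AddMonoidAlgebra R (ℤ × ℤ) :=
  mapDomainAlgHom R R (AddMonoidHom.inl ℤ ℤ)

theorem muLaurent_single_s6 (p : ℤ × ℤ) (c : R) :
    muLaurent R (single p c) = single (p.1 + p.2) c := by
  simp [muLaurent]

theorem laurentInl_single (n : ℤ) (c : R) : laurentInl R (single n c) = single (n, 0) c := by
  simp only [laurentInl, mapDomainAlgHom_apply, mapDomain_single, AddMonoidHom.inl_apply]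

theorem muLaurent_xSubY : muLaurent R (xSubY R) = 0 := by
  simp [xSubY, muLaurent_single_s6]

theorem muLaurent_comp_laurentInl : (muLaurent R).comp (laurentInl R) = AlgHom.id R R[T;T⁻¹] := by
  rw [muLaurent, laurentInl, ← mapDomainAlgHom_comp, ← mapDomainAlgHom_id]
  congr 1
  ext; simp

theorem ker_muLaurent_s6 : RingHom.ker (muLaurent R) = Ideal.span {xSubY R} := by
  set q := Ideal.Quotient.mkₐ R (Ideal.span {xSubY R})
  have hxy : q (single (1, 0) 1) = q (single (0, 1) 1) :=
    Ideal.Quotient.eq.2 (Ideal.mem_span_singleton_self _)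
  have hswap : ∀ b : ℤ, q (single (0, b) 1) = q (single (b, 0) 1) := by
    let φ (e : ℤ →+ ℤ × ℤ) : Multiplicative ℤ →* R[ℤ × ℤ] ⧸ Ideal.span {xSubY R} :=
      (q : R[ℤ × ℤ] →* _).comp ((of R (ℤ × ℤ)).comp e.toMultiplicative)
    have := MonoidHom.ext_mint (f := φ (.inr ℤ ℤ)) (g := φ (.inl ℤ ℤ)) hxy.symm
    exact fun b => DFunLike.congr_fun this (Multiplicative.ofAdd b)
  -- Modulo `x - y`, the composite `(a, b) ↦ a + b ↦ (a + b, 0)` is the identity.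
  have hq : q.comp ((laurentInl R).comp (muLaurent R)) = q := by
    ext ⟨a, b⟩
    calc q (laurentInl R (muLaurent R (single (a, b) 1)))
        = q (single (a, 0) 1 * single (b, 0) 1) := by
          rw [muLaurent_single_s6, laurentInl_single, single_mul_single]; simp
      _ = q (single (a, 0) 1 * single (0, b) 1) := by rw [map_mul, map_mul, hswap]
      _ = q (single (a, b) 1) := by rw [single_mul_single]; simp
  refine le_antisymm (fun f hf => ?_) ((Ideal.span_singleton_le_iff_mem _).2 (muLaurent_xSubY R))
  rw [← Ideal.Quotient.eq_zero_iff_mem]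
  change q f = 0
  rw [← hq]
  simp [(RingHom.mem_ker).1 hf]

def muLaurentLinear :
    AddMonoidAlgebra R (ℤ × ℤ) →ₗ[AddMonoidAlgebra R (ℤ × ℤ)] laurentAsS'Mod R where
  toFun := muLaurent R
  map_add' := map_add _
  map_smul' := map_mul (muLaurent R)

theorem isLeftRegular_xSubY : IsLeftRegular (xSubY R) :=
  isLeftRegular_single_one_sub_single_one (by simp)

theorem xSubY_smul_laurent (l : R[T;T⁻¹]) : xSubY R • l = 0 := by
  change muLaurent R (xSubY R) * l = 0
  rw [muLaurent_xSubY, zero_mul]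

theorem exact_mulLeft_xSubY_muLaurentLinear :
    Function.Exact (LinearMap.mulLeft (AddMonoidAlgebra R (ℤ × ℤ)) (xSubY R))
      (muLaurentLinear R) := fun f => by
  change f ∈ RingHom.ker (muLaurent R) ↔ ∃ g, xSubY R * g = f
  rw [ker_muLaurent_s6, Ideal.mem_span_singleton]
  exact ⟨fun ⟨g, hg⟩ => ⟨g, hg.symm⟩, fun ⟨g, hg⟩ => ⟨g, hg.symm⟩⟩

theorem surjective_muLaurentLinear : Function.Surjective (muLaurentLinear R) := fun l =>
  ⟨laurentInl R l, DFunLike.congr_fun (muLaurent_comp_laurentInl R) l⟩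

/-- `Tor_0^{S′}(R[t,t⁻¹], R[t,t⁻¹]) ≅ R[t,t⁻¹]` and `Tor_1^{S′}(R[t,t⁻¹], R[t,t⁻¹]) ≅ R[t,t⁻¹]`
as `S′`-modules (with `S′` acting through `μ′`), and `Tor_n^{S′}(R[t,t⁻¹], R[t,t⁻¹]) = 0` for
all `n ≥ 2`, where `S′` is the monoid algebra of `ℤ × ℤ` over `R` and `R[t,t⁻¹]` is an
`S′`-module via `μ′`. -/
theorem tor_laurent_ring :
    Nonempty ((((Tor (ModuleCat (AddMonoidAlgebra R (ℤ × ℤ))) 0).obj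
        (laurentAsS'Mod R)).obj (laurentAsS'Mod R)) ≅ laurentAsS'Mod R) ∧
    Nonempty ((((Tor (ModuleCat (AddMonoidAlgebra R (ℤ × ℤ))) 1).obj
        (laurentAsS'Mod R)).obj (laurentAsS'Mod R)) ≅ laurentAsS'Mod R) ∧
    ∀ n : ℕ, 2 ≤ n →
      Limits.IsZero (((Tor (ModuleCat (AddMonoidAlgebra R (ℤ × ℤ))) n).obj
        (laurentAsS'Mod R)).obj (laurentAsS'Mod R)) := by
  have hs := isLeftRegular_xSubY R
  have hexact := exact_mulLeft_xSubY_muLaurentLinear R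
  have hπ := surjective_muLaurentLinear R
  have hN := xSubY_smul_laurent R
  exact ⟨⟨torIsoOfLeOne _ hs hexact hπ hN 0 zero_le_one⟩,
    ⟨torIsoOfLeOne _ hs hexact hπ hN 1 le_rfl⟩, isZero_tor_of_two_le _ hs hexact hπ⟩

end
end
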